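/- arXiv:1009.2138 — 2 statements merged into one kernel-verified Lean document; each statement's English description precedes it below -/
import Mathlib

section
/- Let d ≥ 2 and 2 < p < 2d/(d-2) (any p > 2 if d = 2). Define ϑ(d,p) = d(p-2)/(2p), a_c = (d-2)/2, Λ(a) = (a - a_c)², and Θ(a,p,d) = (p-2)/(32(d-1)p) · [(p+2)²(d² + 4a² - 4a(d-2)) - 4p(p+4)(d-1)]. Then for a < a_c, the inequality ϑ(d,p) < Θ(a,p,d) holds if and only if a < a_c - 2(d-1)/(p+2). -/
/-- For `d ≥ 2`, `2 < p < 2d/(d-2)` (any `p > 2` if `d = 2`) and `a < a_c`,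
`ϑ(d,p) < Θ(a,p,d)` if and only if `a < a_c - 2(d-1)/(p+2)`. -/
theorem stmt0 (d : ℕ) (hd : 2 ≤ d) (p a : ℝ) (hp : 2 < p)
    (hp' : 3 ≤ d → p < 2 * d / (d - 2))
    (ha : a < (d - 2 : ℝ) / 2) :
    (d * (p - 2) / (2 * p) <
      (p - 2) / (32 * (d - 1) * p) *
        ((p + 2) ^ 2 * (d ^ 2 + 4 * a ^ 2 - 4 * a * (d - 2)) - 4 * p * (p + 4) * (d - 1)))
    ↔ a < (d - 2 : ℝ) / 2 - 2 * (d - 1) / (p + 2) := by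
  have hD : (2:ℝ) ≤ (d:ℝ) := by exact_mod_cast hd
  have hd1 : (0:ℝ) < (d:ℝ) - 1 := by linarith
  have hp0 : (0:ℝ) < p := by linarith
  have hp2 : (0:ℝ) < p - 2 := by linarith
  have hp2' : (0:ℝ) < p + 2 := by linarith
  have e1 : (p - 2) / (32 * ((d:ℝ) - 1) * p) *
        ((p + 2) ^ 2 * ((d:ℝ) ^ 2 + 4 * a ^ 2 - 4 * a * ((d:ℝ) - 2)) - 4 * p * (p + 4) * ((d:ℝ) - 1))
      = ((p - 2) * ((p + 2) ^ 2 * ((d:ℝ) ^ 2 + 4 * a ^ 2 - 4 * a * ((d:ℝ) - 2)) - 4 * p * (p + 4) * ((d:ℝ) - 1)))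
        / (32 * ((d:ℝ) - 1) * p) := by ring
  have e2 : ((d:ℝ) - 2) / 2 - 2 * ((d:ℝ) - 1) / (p + 2)
      = (((d:ℝ) - 2) * (p + 2) - 4 * ((d:ℝ) - 1)) / (2 * (p + 2)) := by
    field_simp
    ring
  rw [e1, e2, div_lt_div_iff₀ (by positivity) (by positivity), lt_div_iff₀ (by positivity)]
  have hb : 0 < ((d:ℝ) - 2) / 2 - a := by linarith
  constructor <;> intro h
  · by_contra hc
    push_neg at hc
    have hn : 0 ≤ 2*((d:ℝ)-1) - (p+2)*(((d:ℝ)-2)/2 - a) := by nlinarith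
    have hn2 : 0 ≤ 2*((d:ℝ)-1) + (p+2)*(((d:ℝ)-2)/2 - a) := by positivity
    nlinarith [mul_nonneg hn hn2, mul_pos hp0 hp2,
      mul_nonneg (mul_nonneg hn hn2) (mul_pos hp0 hp2).le]
  · have hn : 0 < (p+2)*(((d:ℝ)-2)/2 - a) - 2*((d:ℝ)-1) := by nlinarith
    have hn2 : 0 < (p+2)*(((d:ℝ)-2)/2 - a) + 2*((d:ℝ)-1) := by positivity
    nlinarith [mul_pos hn hn2, mul_pos hp0 hp2,
      mul_pos (mul_pos hn hn2) (mul_pos hp0 hp2)]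
end

section
/- Let C be a measure space, p > 2, and w ∈ L²(C) ∩ L^p(C) a nonzero function. Then ∫_C |w|² log(|w|²/‖w‖_{L²}²) dμ ≤ (p/(p-2)) · ‖w‖_{L²}² · log(‖w‖_{L^p}²/‖w‖_{L²}²). (This follows by differentiating the Hölder interpolation inequality ‖w‖_q ≤ ‖w‖_2^ζ ‖w‖_p^{1-ζ}, ζ = 2(p-q)/(q(p-2)), with respect to q at q = 2.) -/
/-! Since `log` lies below its tangent line at `1`,
`log (a * (|t| / N) ^ (p - 2)) ≤ a * (|t| / N) ^ (p - 2) - 1` for every `a > 0`.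
Multiplying by `t²` and integrating bounds `∫ w² log (w² / N²)` by a combination of
`∫ |w| ^ p` and `∫ w²`; with `N = ‖w‖₂`, `P = ‖w‖_p` and `a = (N / P) ^ p` that
combination is the right-hand side. -/

open MeasureTheory Real

lemma MeasureTheory.MemLp.toReal_eLpNorm_rpow {α E : Type*} [MeasurableSpace α]
    [NormedAddCommGroup E] {μ : Measure α} {f : α → E} {q : ℝ} (hq : 0 < q)
    (hf : MemLp f (ENNReal.ofReal q) μ) :
    (eLpNorm f (ENNReal.ofReal q) μ).toReal ^ q = ∫ x, ‖f x‖ ^ q ∂μ := by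
  rw [hf.eLpNorm_eq_integral_rpow_norm (by simpa using hq) ENNReal.ofReal_ne_top,
    ENNReal.toReal_ofReal hq.le, ENNReal.toReal_ofReal (by positivity),
    ← rpow_mul (integral_nonneg fun _ ↦ by positivity), inv_mul_cancel₀ hq.ne', rpow_one]

lemma MeasureTheory.MemLp.toReal_eLpNorm_two_sq {α : Type*} [MeasurableSpace α]
    {μ : Measure α} {f : α → ℝ} (hf : MemLp f (ENNReal.ofReal 2) μ) :
    (eLpNorm f (ENNReal.ofReal 2) μ).toReal ^ 2 = ∫ x, f x ^ 2 ∂μ := by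
  simpa only [rpow_two, norm_eq_abs, sq_abs] using hf.toReal_eLpNorm_rpow two_pos

lemma Real.mul_log_le_mul_rpow_sub (r : ℝ) {a x : ℝ} (ha : 0 < a) (hx : 0 < x) :
    r * log x ≤ a * x ^ r - 1 - log a := by
  have := log_le_sub_one_of_pos (mul_pos ha (rpow_pos_of_pos hx r))
  rw [log_mul ha.ne' (rpow_pos_of_pos hx r).ne', log_rpow hx] at this
  linarith

lemma Real.sq_mul_log_sq_div_le {p N a : ℝ} (hp : 2 < p) (hN : 0 < N) (ha : 0 < a) (t : ℝ) :
    t ^ 2 * log (t ^ 2 / N ^ 2) ≤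
      2 / (p - 2) * (a / N ^ (p - 2) * |t| ^ p - (1 + log a) * t ^ 2) := by
  rcases eq_or_ne t 0 with rfl | ht
  · simp [zero_rpow (by linarith : p ≠ 0)]
  have hx : 0 < |t| / N := div_pos (abs_pos.mpr ht) hN
  have hlog : log (t ^ 2 / N ^ 2) = 2 * log (|t| / N) := by
    rw [← sq_abs t, ← div_pow, log_pow]; push_cast; rfl
  have hpow : t ^ 2 * (|t| / N) ^ (p - 2) = |t| ^ p / N ^ (p - 2) := by
    rw [div_rpow (abs_nonneg t) hN.le, ← sq_abs, mul_div_assoc', ← rpow_natCast,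
      ← rpow_add (abs_pos.mpr ht)]
    norm_num
  have key : (p - 2) * (t ^ 2 * log (|t| / N)) ≤
      a / N ^ (p - 2) * |t| ^ p - (1 + log a) * t ^ 2 := by
    have := mul_le_mul_of_nonneg_left (mul_log_le_mul_rpow_sub (p - 2) ha hx) (sq_nonneg t)
    rw [div_mul_eq_mul_div, mul_div_assoc, ← hpow]
    linarith
  calc t ^ 2 * log (t ^ 2 / N ^ 2) = 2 / (p - 2) * ((p - 2) * (t ^ 2 * log (|t| / N))) := by
        rw [hlog]; field_simp [(sub_pos.mpr hp).ne']
    _ ≤ _ := by gcongr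

theorem MeasureTheory.integral_sq_mul_log_sq_div_le {α : Type*} [MeasurableSpace α]
    {μ : Measure α} {w : α → ℝ} {p N a : ℝ} (hp : 2 < p) (hN : 0 < N) (ha : 0 < a)
    (hw2 : Integrable (fun x ↦ w x ^ 2) μ) (hwp : Integrable (fun x ↦ |w x| ^ p) μ)
    (hlog : Integrable (fun x ↦ w x ^ 2 * log (w x ^ 2)) μ) :
    ∫ x, w x ^ 2 * log (w x ^ 2 / N ^ 2) ∂μ ≤
      2 / (p - 2) *
        (a / N ^ (p - 2) * ∫ x, |w x| ^ p ∂μ - (1 + log a) * ∫ x, w x ^ 2 ∂μ) := by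
  have hlog' : Integrable (fun x ↦ w x ^ 2 * log (w x ^ 2 / N ^ 2)) μ := by
    refine (hlog.sub (hw2.mul_const (log (N ^ 2)))).congr (.of_forall fun x ↦ ?_)
    rcases eq_or_ne (w x) 0 with h | h
    · simp [h]
    · simp only [Pi.sub_apply, log_div (pow_ne_zero 2 h) (by positivity : N ^ 2 ≠ 0)]; ring
  rw [← integral_const_mul, ← integral_const_mul, ← integral_sub (hwp.const_mul _)
    (hw2.const_mul _), ← integral_const_mul]
  exact integral_mono hlog' (((hwp.const_mul _).sub (hw2.const_mul _)).const_mul _)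
    fun x ↦ sq_mul_log_sq_div_le hp hN ha (w x)

theorem stmt5_general {C : Type*} [MeasurableSpace C] (μ : Measure C)
    (p : ℝ) (hp : 2 < p) (w : C → ℝ)
    (hw2 : MemLp w (ENNReal.ofReal 2) μ) (hwp : MemLp w (ENNReal.ofReal p) μ)
    (hw0 : eLpNorm w (ENNReal.ofReal 2) μ ≠ 0)
    (hint : Integrable (fun x => (w x) ^ 2 * Real.log ((w x) ^ 2)) μ) :
    ∫ x, (w x) ^ 2 *
        Real.log ((w x) ^ 2 / ((eLpNorm w (ENNReal.ofReal 2) μ).toReal) ^ 2) ∂μ ≤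
      p / (p - 2) * ((eLpNorm w (ENNReal.ofReal 2) μ).toReal) ^ 2 *
        Real.log (((eLpNorm w (ENNReal.ofReal p) μ).toReal) ^ 2
          / ((eLpNorm w (ENNReal.ofReal 2) μ).toReal) ^ 2) := by
  set N := (eLpNorm w (ENNReal.ofReal 2) μ).toReal
  set P := (eLpNorm w (ENNReal.ofReal p) μ).toReal
  have hp0 : 0 < p := by linarith
  have hN : 0 < N := ENNReal.toReal_pos hw0 hw2.eLpNorm_ne_top
  have hP : 0 < P := by
    refine ENNReal.toReal_pos (fun h ↦ hw0 ?_) hwp.eLpNorm_ne_top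
    rw [eLpNorm_eq_zero_iff hwp.1 (by simpa using hp0)] at h
    rw [eLpNorm_congr_ae h, eLpNorm_zero]
  have hw2' : Integrable (fun x ↦ w x ^ 2) μ := by
    simpa only [rpow_two, norm_eq_abs, sq_abs, ENNReal.toReal_ofReal zero_le_two] using
      hw2.integrable_norm_rpow (by simp) ENNReal.ofReal_ne_top
  have hwp' : Integrable (fun x ↦ |w x| ^ p) μ := by
    simpa only [norm_eq_abs, ENNReal.toReal_ofReal hp0.le] using
      hwp.integrable_norm_rpow (by simpa using hp0) ENNReal.ofReal_ne_top
  refine (integral_sq_mul_log_sq_div_le hp hN (a := (N / P) ^ p) (by positivity) hw2' hwp'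
    hint).trans_eq ?_
  rw [← hw2.toReal_eLpNorm_two_sq]
  have hPp : ∫ x, |w x| ^ p ∂μ = P ^ p := by
    simpa only [norm_eq_abs] using (hwp.toReal_eLpNorm_rpow hp0).symm
  have hcancel : (N / P) ^ p / N ^ (p - 2) * P ^ p = N ^ 2 := by
    rw [div_rpow hN.le hP.le, rpow_sub hN, rpow_two]
    field_simp
  have hlog : log ((N / P) ^ p) = -(p / 2) * log (P ^ 2 / N ^ 2) := by
    rw [log_rpow (by positivity), ← inv_div, log_inv, ← div_pow, log_pow]
    push_cast; ring
  rw [hPp, hcancel, hlog]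
  field_simp
  ring

/-- for `p > 2` and a nonzero `w ∈ L² ∩ L^p` with `|w|² log |w|²` integrable,
`∫ |w|² log(|w|²/‖w‖₂²) ≤ (p/(p-2)) ‖w‖₂² log(‖w‖_p²/‖w‖₂²)`. -/
theorem stmt5 {C : Type*} [MeasurableSpace C] (μ : Measure C) [SigmaFinite μ]
    (p : ℝ) (hp : 2 < p) (w : C → ℝ)
    (hw2 : MemLp w (ENNReal.ofReal 2) μ) (hwp : MemLp w (ENNReal.ofReal p) μ)
    (hw0 : eLpNorm w (ENNReal.ofReal 2) μ ≠ 0)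
    (hint : Integrable (fun x => (w x) ^ 2 * Real.log ((w x) ^ 2)) μ) :
    ∫ x, (w x) ^ 2 *
        Real.log ((w x) ^ 2 / ((eLpNorm w (ENNReal.ofReal 2) μ).toReal) ^ 2) ∂μ ≤
      p / (p - 2) * ((eLpNorm w (ENNReal.ofReal 2) μ).toReal) ^ 2 *
        Real.log (((eLpNorm w (ENNReal.ofReal p) μ).toReal) ^ 2
          / ((eLpNorm w (ENNReal.ofReal 2) μ).toReal) ^ 2) :=
  stmt5_general μ p hp w hw2 hwp hw0 hint
end
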